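/- In every feasible solution of the PCSCM-MSDM MILP, a batch containing medications with both cooling requirements must be shipped with combination transportation: for every patient type p and time period w, if Σ_k o_{c_cooled,k,p,w} ≥ 1 and Σ_k o_{c_noncooled,k,p,w} ≥ 1, then Σ_d x_{a_comb,d,p,w} = 1 and x_{adpw} = 0 for every a ≠ a_comb and every d. -/

import Mathlib

/-- Transportation cooling types: cooled, non-cooled, combination. -/
inductive TransCool where
  | cooled
  | noncooled
  | comb
  deriving DecidableEq, Inhabited

instance : Fintype TransCool where
  elems := {TransCool.cooled, TransCool.noncooled, TransCool.comb}
  complete := by intro x; cases x <;> simp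

/-- Medication cooling types: cooled, non-cooled. -/
inductive MedCool where
  | cooled
  | noncooled
  deriving DecidableEq, Inhabited

instance : Fintype MedCool where
  elems := {MedCool.cooled, MedCool.noncooled}
  complete := by intro x; cases x <;> simp

/-- Feasibility of a solution `(x, o, m, M)` of the PCSCM-MSDM MILP:
binarity of `x` and constraints (C1)-(C8). -/
def Feasible {D E K P W : Type*} [Fintype D] [Fintype E] [Fintype K] [Fintype P] [Fintype W]
    (q : MedCool → K → P → ℕ) (ρ σ : P → ℕ) (δ : D → W → ℝ)
    (u : TransCool → E → ℝ) (θ : E → W → ℝ) (M1 M2 : ℕ)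
    (x : TransCool → D → P → W → ℕ) (o : MedCool → K → P → W → ℕ)
    (m : E → W → ℕ) (M : E → ℕ) : Prop :=
  -- x is a binary variable
  (∀ a d p w, x a d p w ≤ 1) ∧
  -- (C1) at most one order per patient type per period
  (∀ p w, ∑ a, ∑ d, x a d p w ≤ 1) ∧
  -- (C2) cooled medications need cooled or combination transportation
  (∀ p w, ∑ k, o MedCool.cooled k p w ≤
      M1 * ∑ d, (x TransCool.cooled d p w + x TransCool.comb d p w)) ∧
  -- (C3) non-cooled medications need non-cooled or combination transportation
  (∀ p w, ∑ k, o MedCool.noncooled k p w ≤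
      M2 * ∑ d, (x TransCool.noncooled d p w + x TransCool.comb d p w)) ∧
  -- (C4) demand satisfaction
  (∀ c k p, ∑ w, o c k p w = q c k p) ∧
  -- (C5) minimum number of orders (synchronization)
  (∀ p, σ p ≤ ∑ a, ∑ d, ∑ w, x a d p w) ∧
  -- (C6) delivery capacity
  (∀ d w, (∑ a, ∑ p, (x a d p w : ℝ) * (ρ p : ℝ)) ≤ δ d w) ∧
  -- (C7) staffing hours
  (∀ e w, (∑ a, ∑ d, ∑ p, (x a d p w : ℝ) * u a e * (ρ p : ℝ)) ≤ (m e w : ℝ) * θ e w) ∧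
  -- (C8) total staff dominates per-period staff
  (∀ e w, m e w ≤ M e)

/-- The logistical financial outcome (LFO) of a solution. -/
def LFO {D E K P W : Type*} [Fintype D] [Fintype E] [Fintype K] [Fintype P] [Fintype W]
    (f : K → ℝ) (ρ : P → ℕ) (t : TransCool → D → ℝ) (s : E → ℝ)
    (x : TransCool → D → P → W → ℕ) (o : MedCool → K → P → W → ℕ)
    (M : E → ℕ) : ℝ :=
  (∑ c, ∑ k, ∑ p, ∑ w, (o c k p w : ℝ) * f k * (ρ p : ℝ))
    - (∑ a, ∑ d, ∑ p, ∑ w, (x a d p w : ℝ) * t a d * (ρ p : ℝ))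
    - (∑ e, (M e : ℝ) * s e)

/-! (C2) and (C3) turn positive cooled and non-cooled quantities into at least one cooled-or-combination
order and at least one non-cooled-or-combination order, while (C1) allows a single order in total;
a single order can serve both only if it uses combination transportation. -/

namespace TransCool

theorem sum_univ {β : Type*} [AddCommMonoid β] (f : TransCool → β) :
    ∑ a, f a = f cooled + f noncooled + f comb := by
  rw [show (Finset.univ : Finset TransCool) = {cooled, noncooled, comb} from rfl,
    Finset.sum_insert (by decide), Finset.sum_insert (by decide), Finset.sum_singleton,
    add_assoc]

theorem eq_comb_of_covers_both {D : Type*} [Fintype D] {y : TransCool → D → ℕ}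
    (h_le_one : ∑ a, ∑ d, y a d ≤ 1)
    (h_cooled : 0 < ∑ d, (y cooled d + y comb d))
    (h_noncooled : 0 < ∑ d, (y noncooled d + y comb d)) :
    ∑ d, y comb d = 1 ∧ ∀ a, a ≠ comb → ∀ d, y a d = 0 := by
  rw [sum_univ] at h_le_one
  rw [Finset.sum_add_distrib] at h_cooled h_noncooled
  have h_cooled_zero : ∑ d, y cooled d = 0 := by omega
  have h_noncooled_zero : ∑ d, y noncooled d = 0 := by omega
  refine ⟨by omega, ?_⟩
  rintro (_ | _ | _) ha d
  · exact Finset.sum_eq_zero_iff.mp h_cooled_zero d (Finset.mem_univ d)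
  · exact Finset.sum_eq_zero_iff.mp h_noncooled_zero d (Finset.mem_univ d)
  · exact absurd rfl ha

end TransCool

theorem mixed_batch_comb_transport_general
    {D E K P W : Type*} [Fintype D] [Fintype E] [Fintype K] [Fintype P] [Fintype W]
    (q : MedCool → K → P → ℕ) (ρ σ : P → ℕ) (δ : D → W → ℝ)
    (u : TransCool → E → ℝ) (θ : E → W → ℝ) (M1 M2 : ℕ)
    (x : TransCool → D → P → W → ℕ) (o : MedCool → K → P → W → ℕ)
    (m : E → W → ℕ) (M : E → ℕ)
    (hfeas : Feasible q ρ σ δ u θ M1 M2 x o m M) :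
    ∀ p w, 1 ≤ ∑ k, o MedCool.cooled k p w → 1 ≤ ∑ k, o MedCool.noncooled k p w →
      (∑ d, x TransCool.comb d p w = 1) ∧
        (∀ a, a ≠ TransCool.comb → ∀ d, x a d p w = 0) := by
  intro p w h_cooled h_noncooled
  obtain ⟨-, hC1, hC2, hC3, -⟩ := hfeas
  exact TransCool.eq_comb_of_covers_both (hC1 p w)
    (Nat.pos_of_mul_pos_left (lt_of_lt_of_le h_cooled (hC2 p w)))
    (Nat.pos_of_mul_pos_left (lt_of_lt_of_le h_noncooled (hC3 p w)))

/-- In every feasible solution, a batch containing medications with both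
cooling requirements must be shipped with combination transportation. -/
theorem mixed_batch_comb_transport
    {D E K P W : Type*} [Fintype D] [Fintype E] [Fintype K] [Fintype P] [Fintype W]
    [Nonempty D] [Nonempty W]
    (q : MedCool → K → P → ℕ) (ρ σ : P → ℕ) (δ : D → W → ℝ)
    (u : TransCool → E → ℝ) (θ : E → W → ℝ) (M1 M2 : ℕ)
    (hρ : ∀ p, 1 ≤ ρ p) (hσ : ∀ p, 1 ≤ σ p)
    (hδ : ∀ d w, 0 ≤ δ d w) (hu : ∀ a e, 0 ≤ u a e) (hθ : ∀ e w, 0 < θ e w)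
    (x : TransCool → D → P → W → ℕ) (o : MedCool → K → P → W → ℕ)
    (m : E → W → ℕ) (M : E → ℕ)
    (hfeas : Feasible q ρ σ δ u θ M1 M2 x o m M) :
    ∀ p w, 1 ≤ ∑ k, o MedCool.cooled k p w → 1 ≤ ∑ k, o MedCool.noncooled k p w →
      (∑ d, x TransCool.comb d p w = 1) ∧
        (∀ a, a ≠ TransCool.comb → ∀ d, x a d p w = 0) :=
  mixed_batch_comb_transport_general q ρ σ δ u θ M1 M2 x o m M hfeas
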